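/- arXiv:2502.02280 — 2 statements merged into one kernel-verified Lean document; each statement's English description precedes it below -/
import Mathlib

section
/- Let δ > 0 and γ, α ∈ (0,1). There exists a nonnegative integer t̄ such that for every x ∈ C_s ∩ B, every integer t ≥ t̄, and every x⁺ ∈ Π_{C_s ∩ B}(x − γ α^t ∇f(x)), the sufficient-decrease condition f(x) − f(x⁺) ≥ (δ/2) ‖x − x⁺‖₂² holds; in particular, the resulting step sizes γ α^t all lie in the interval (0, γ]. -/
open scoped RealInnerProductSpace
open Finset Filter

/-- `ℓ₀`-"norm": number of nonzero coordinates of `x`. -/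
noncomputable def l0norm {n : ℕ} (x : EuclideanSpace ℝ (Fin n)) : ℕ :=
  Nat.card {i : Fin n // x i ≠ 0}

/-- The sparsity set `C_t = {x : ‖x‖₀ ≤ t}`. -/
def sparseSet (n t : ℕ) : Set (EuclideanSpace ℝ (Fin n)) := {x | l0norm x ≤ t}

/-- The box `B = [0,1]ⁿ`. -/
def boxSet (n : ℕ) : Set (EuclideanSpace ℝ (Fin n)) := {x | ∀ i, 0 ≤ x i ∧ x i ≤ 1}

/-- Objective `f(x) = (1/m) ∑ i (xᵀ A_i x − y_i)²`. -/
noncomputable def fObj {n m : ℕ} (A : Fin m → Matrix (Fin n) (Fin n) ℝ) (y : Fin m → ℝ)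
    (x : EuclideanSpace ℝ (Fin n)) : ℝ :=
  (1 / (m : ℝ)) * ∑ i, ((∑ u, ∑ v, x u * A i u v * x v) - y i) ^ 2

/-- Euclidean projection set of `z` onto `S`. -/
def projSet {n : ℕ} (S : Set (EuclideanSpace ℝ (Fin n))) (z : EuclideanSpace ℝ (Fin n)) :
    Set (EuclideanSpace ℝ (Fin n)) :=
  {x | x ∈ S ∧ ∀ w ∈ S, ‖x - z‖ ≤ ‖w - z‖}

/-! The box `B` is compact and convex and `f` is `C²`, so `∇f` is `L`-Lipschitz on `B`, which
gives the descent bound `f x⁺ ≤ f x + ⟪∇f x, x⁺ - x⟫ + L ‖x⁺ - x‖²` for `x, x⁺ ∈ B`. Comparing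
`x⁺` with the feasible point `x` in the projection problem gives
`‖x⁺ - x‖² ≤ -2η ⟪∇f x, x⁺ - x⟫` for the step `η = γ αᵗ`. Together these yield sufficient
decrease as soon as `η (2L + δ) ≤ 1`, which holds for all large `t` because `γ αᵗ → 0`. -/

open scoped NNReal

lemma fObj_contDiff {n m : ℕ} (A : Fin m → Matrix (Fin n) (Fin n) ℝ) (y : Fin m → ℝ) :
    ContDiff ℝ 2 (fObj A y) := by
  unfold fObj
  fun_prop

lemma boxSet_eq_preimage_Icc (n : ℕ) :
    boxSet n = EuclideanSpace.equiv (Fin n) ℝ ⁻¹' Set.Icc 0 1 := by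
  ext x; simp [boxSet, Set.mem_Icc, Pi.le_def, forall_and]

lemma convex_boxSet (n : ℕ) : Convex ℝ (boxSet n) := by
  rw [boxSet_eq_preimage_Icc]
  exact (convex_Icc 0 1).linear_preimage (EuclideanSpace.equiv (Fin n) ℝ).toLinearMap

lemma isCompact_boxSet (n : ℕ) : IsCompact (boxSet n) := by
  rw [boxSet_eq_preimage_Icc]
  exact (EuclideanSpace.equiv (Fin n) ℝ).toHomeomorph.isCompact_preimage.2 isCompact_Icc

theorem Convex.norm_image_sub_sub_fderiv_le_of_lipschitzOnWith {E F : Type*}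
    [NormedAddCommGroup E] [NormedSpace ℝ E] [NormedAddCommGroup F] [NormedSpace ℝ F]
    {f : E → F} {s : Set E} {K : ℝ≥0} (hs : Convex ℝ s) (hf : ∀ x ∈ s, DifferentiableAt ℝ f x)
    (hK : LipschitzOnWith K (fderiv ℝ f) s) {a b : E} (ha : a ∈ s) (hb : b ∈ s) :
    ‖f b - f a - fderiv ℝ f a (b - a)‖ ≤ K * ‖b - a‖ ^ 2 := by
  have hseg := hs.segment_subset ha hb
  have bound : ∀ z ∈ segment ℝ a b, ‖fderiv ℝ f z - fderiv ℝ f a‖ ≤ K * ‖b - a‖ := by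
    intro z hz
    have hza : ‖z - a‖ ≤ ‖b - a‖ := by
      have := dist_add_dist_of_mem_segment hz
      rw [dist_eq_norm', dist_eq_norm', dist_eq_norm'] at this
      linarith [norm_nonneg (b - z)]
    calc ‖fderiv ℝ f z - fderiv ℝ f a‖ ≤ K * ‖z - a‖ :=
          lipschitzOnWith_iff_norm_sub_le.1 hK (hseg hz) ha
      _ ≤ K * ‖b - a‖ := by gcongr
  calc ‖f b - f a - fderiv ℝ f a (b - a)‖ ≤ K * ‖b - a‖ * ‖b - a‖ :=
        (convex_segment a b).norm_image_sub_le_of_norm_fderiv_le' (fun z hz => hf z (hseg hz))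
          bound (left_mem_segment ℝ a b) (right_mem_segment ℝ a b)
    _ = K * ‖b - a‖ ^ 2 := by ring

lemma sq_norm_sub_le_of_mem_projSet {n : ℕ} {S : Set (EuclideanSpace ℝ (Fin n))}
    {x g xp : EuclideanSpace ℝ (Fin n)} {η : ℝ} (hx : x ∈ S) (hxp : xp ∈ projSet S (x - η • g)) :
    ‖xp - x‖ ^ 2 ≤ -(2 * η * ⟪g, xp - x⟫) := by
  have hmin := hxp.2 x hx
  rw [sub_sub_cancel, show xp - (x - η • g) = (xp - x) + η • g by abel] at hmin
  have hsq := pow_le_pow_left₀ (norm_nonneg _) hmin 2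
  rw [norm_add_sq_real, real_inner_smul_right, real_inner_comm] at hsq
  linarith

lemma sufficient_decrease_of_mem_projSet {n : ℕ} {S K : Set (EuclideanSpace ℝ (Fin n))}
    {f : EuclideanSpace ℝ (Fin n) → ℝ} {L : ℝ≥0} {δ η : ℝ} (hSK : S ⊆ K) (hK : Convex ℝ K)
    (hf : Differentiable ℝ f) (hL : LipschitzOnWith L (fderiv ℝ f) K) (hη : 0 < η)
    (hstep : η * (2 * L + δ) ≤ 1) {x xp : EuclideanSpace ℝ (Fin n)} (hx : x ∈ S)
    (hxp : xp ∈ projSet S (x - η • gradient f x)) :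
    δ / 2 * ‖x - xp‖ ^ 2 ≤ f x - f xp := by
  have hproj := sq_norm_sub_le_of_mem_projSet hx hxp
  have hdesc := le_of_abs_le <|
    hK.norm_image_sub_sub_fderiv_le_of_lipschitzOnWith (fun z _ => hf z) hL (hSK hx) (hSK hxp.1)
  have hgrad : ⟪gradient f x, xp - x⟫ = fderiv ℝ f x (xp - x) :=
    InnerProductSpace.toDual_symm_apply
  rw [← hgrad] at hdesc
  rw [norm_sub_rev]
  have hq : 0 ≤ ‖xp - x‖ ^ 2 := sq_nonneg _
  have : η * (δ * ‖xp - x‖ ^ 2) ≤ η * (2 * (f x - f xp)) := by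
    nlinarith [mul_le_mul_of_nonneg_right hstep hq, mul_le_mul_of_nonneg_left hdesc hη.le]
  linarith [le_of_mul_le_mul_left this hη]

theorem armijo_uniform_termination_general {n m s : ℕ}
    (A : Fin m → Matrix (Fin n) (Fin n) ℝ) (y : Fin m → ℝ)
    {δ γ α : ℝ} (hγ0 : 0 < γ) (hα0 : 0 < α) (hα1 : α < 1) :
    ∃ tbar : ℕ, ∀ x ∈ sparseSet n s ∩ boxSet n, ∀ t : ℕ, tbar ≤ t →
      (∀ xp ∈ projSet (sparseSet n s ∩ boxSet n) (x - (γ * α ^ t) • gradient (fObj A y) x),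
        fObj A y x - fObj A y xp ≥ δ / 2 * ‖x - xp‖ ^ 2) ∧
      0 < γ * α ^ t ∧ γ * α ^ t ≤ γ := by
  have hf := fObj_contDiff A y
  obtain ⟨L, hL⟩ := (hf.fderiv_right (m := 1) le_rfl).contDiffOn.exists_lipschitzOnWith
    one_ne_zero (convex_boxSet n) (isCompact_boxSet n)
  have hsmall : Tendsto (fun t : ℕ => γ * α ^ t * (2 * L + δ)) atTop (nhds 0) := by
    simpa using ((tendsto_pow_atTop_nhds_zero_of_lt_one hα0.le hα1).const_mul γ).mul_const
      (2 * (L : ℝ) + δ)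
  obtain ⟨tbar, htbar⟩ := eventually_atTop.1 (hsmall.eventually_le_const zero_lt_one)
  have hη : ∀ t : ℕ, 0 < γ * α ^ t := fun t => by positivity
  refine ⟨tbar, fun x hx t ht => ⟨fun xp hxp => ?_, hη t, ?_⟩⟩
  · exact sufficient_decrease_of_mem_projSet Set.inter_subset_right (convex_boxSet n)
      (hf.differentiable two_ne_zero) hL (hη t) (htbar t ht) hx hxp
  · exact mul_le_of_le_one_right hγ0.le (pow_le_one₀ hα0.le hα1.le)

/-- Remark 1: the Armijo backtracking terminates uniformly; for all large
enough `t`, the step size `γ αᵗ` yields sufficient decrease, and these step sizes lie in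
`(0, γ]`. -/
theorem armijo_uniform_termination {n m s : ℕ} (hn : 0 < n) (hm : 0 < m) (hs : 0 < s)
    (hsn : s ≤ n) (A : Fin m → Matrix (Fin n) (Fin n) ℝ) (y : Fin m → ℝ)
    {δ γ α : ℝ} (hδ : 0 < δ) (hγ0 : 0 < γ) (hγ1 : γ < 1) (hα0 : 0 < α) (hα1 : α < 1) :
    ∃ tbar : ℕ, ∀ x ∈ sparseSet n s ∩ boxSet n, ∀ t : ℕ, tbar ≤ t →
      (∀ xp ∈ projSet (sparseSet n s ∩ boxSet n) (x - (γ * α ^ t) • gradient (fObj A y) x),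
        fObj A y x - fObj A y xp ≥ δ / 2 * ‖x - xp‖ ^ 2) ∧
      0 < γ * α ^ t ∧ γ * α ^ t ≤ γ :=
  armijo_uniform_termination_general A y hγ0 hα0 hα1
end

section
/- Let 0 < τ_min ≤ τ_max, let {τ_k} be a sequence in [τ_min, τ_max], and let {x^k} be a sequence in C_s ∩ B satisfying x^{k+1} ∈ Π_{C_s ∩ B}(x^k − τ_k ∇f(x^k)) for every k and ‖x^{k+1} − x^k‖₂ → 0 as k → ∞. If along a subsequence x^{k_j} → x̃ and τ_{k_j} → τ̃, then x̃ ∈ Π_{C_s ∩ B}(x̃ − τ̃ ∇f(x̃)); that is, every cluster point of the sequence is an L-stationary point of the problem of minimizing f over C_s ∩ B. -/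
open scoped RealInnerProductSpace
open Finset Filter

open Topology

/-! Each iterate is a projection of the previous one, and the projection correspondence onto the
closed set `C_s ∩ B` has closed graph (`C_s` is closed because `‖·‖₀` is lower semicontinuous).
Since consecutive iterates merge, `x^{k_j + 1} → x̃` along with `x^{k_j} → x̃`, and `∇f` is
continuous, so the projection inequalities pass to the limit. -/

theorem ContDiff.continuous_gradient {F : Type*} [NormedAddCommGroup F] [InnerProductSpace ℝ F]
    [CompleteSpace F] {f : F → ℝ} (hf : ContDiff ℝ 1 f) : Continuous (gradient f) :=
  (InnerProductSpace.toDual ℝ F).symm.continuous.comp (hf.continuous_fderiv one_ne_zero)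

theorem contDiff_fObj {n m : ℕ} (A : Fin m → Matrix (Fin n) (Fin n) ℝ) (y : Fin m → ℝ) :
    ContDiff ℝ 1 (fObj A y) := by
  have hcoord (u : Fin n) : ContDiff ℝ 1 fun x : EuclideanSpace ℝ (Fin n) => x u :=
    (EuclideanSpace.proj (𝕜 := ℝ) u).contDiff
  exact contDiff_const.mul <| ContDiff.sum fun i _ =>
    ((ContDiff.sum fun u _ => ContDiff.sum fun v _ =>
      ((hcoord u).mul contDiff_const).mul (hcoord v)).sub contDiff_const).pow 2

theorem lowerSemicontinuous_l0norm (n : ℕ) :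
    LowerSemicontinuous (l0norm : EuclideanSpace ℝ (Fin n) → ℕ) := by
  intro x k hk
  have hsupp : ∀ᶠ z in 𝓝 x, ∀ i, x i ≠ 0 → z i ≠ 0 :=
    eventually_all.2 fun i => by
      by_cases hi : x i = 0
      · exact .of_forall fun _ h => absurd hi h
      · exact ((EuclideanSpace.proj (𝕜 := ℝ) i).continuous.continuousAt.eventually_ne hi).mono
          fun _ h _ => h
  filter_upwards [hsupp] with z hz
  exact hk.trans_le <|
    Nat.card_mono (s := {i | x i ≠ 0}) (t := {i | z i ≠ 0}) (Set.toFinite _) hz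

theorem isClosed_sparseSet (n t : ℕ) : IsClosed (sparseSet n t) :=
  (lowerSemicontinuous_l0norm n).isClosed_preimage t

theorem isClosed_boxSet (n : ℕ) : IsClosed (boxSet n) := by
  have hcoord (i : Fin n) : Continuous fun x : EuclideanSpace ℝ (Fin n) => x i :=
    (EuclideanSpace.proj (𝕜 := ℝ) i).continuous
  simp only [boxSet, Set.ofPred_forall]
  exact isClosed_iInter fun i =>
    (isClosed_le continuous_const (hcoord i)).inter (isClosed_le (hcoord i) continuous_const)

theorem mem_projSet_of_tendsto {n : ℕ} {S : Set (EuclideanSpace ℝ (Fin n))} (hS : IsClosed S)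
    {ι : Type*} {l : Filter ι} [l.NeBot] {u z : ι → EuclideanSpace ℝ (Fin n)}
    {u₀ z₀ : EuclideanSpace ℝ (Fin n)} (hu : Tendsto u l (𝓝 u₀)) (hz : Tendsto z l (𝓝 z₀))
    (hproj : ∀ i, u i ∈ projSet S (z i)) : u₀ ∈ projSet S z₀ :=
  ⟨hS.mem_of_tendsto hu (.of_forall fun i => (hproj i).1), fun w hw =>
    le_of_tendsto_of_tendsto' (hu.sub hz).norm (tendsto_const_nhds.sub hz).norm
      fun i => (hproj i).2 w hw⟩

theorem Filter.Tendsto.comp_succ_of_tendsto_norm_sub {E : Type*} [SeminormedAddCommGroup E]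
    {x : ℕ → E} {φ : ℕ → ℕ} {x₀ : E} (hx : Tendsto (fun j => x (φ j)) atTop (𝓝 x₀))
    (hdiff : Tendsto (fun k => ‖x (k + 1) - x k‖) atTop (𝓝 0)) (hφ : Tendsto φ atTop atTop) :
    Tendsto (fun j => x (φ j + 1)) atTop (𝓝 x₀) := by
  have hstep : Tendsto (fun j => x (φ j + 1) - x (φ j)) atTop (𝓝 0) :=
    tendsto_zero_iff_norm_tendsto_zero.2 (hdiff.comp hφ)
  simpa using hstep.add hx

theorem cluster_point_is_L_stationary_general {n m s : ℕ} (A : Fin m → Matrix (Fin n) (Fin n) ℝ)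
    (y : Fin m → ℝ) (τ : ℕ → ℝ) (x : ℕ → EuclideanSpace ℝ (Fin n))
    (hupd : ∀ k, x (k + 1) ∈
      projSet (sparseSet n s ∩ boxSet n) (x k - τ k • gradient (fObj A y) (x k)))
    (hdiff : Tendsto (fun k => ‖x (k + 1) - x k‖) atTop (nhds 0))
    {φ : ℕ → ℕ} (hφ : StrictMono φ) {xt : EuclideanSpace ℝ (Fin n)} {τt : ℝ}
    (hxconv : Tendsto (fun j => x (φ j)) atTop (nhds xt))
    (hτconv : Tendsto (fun j => τ (φ j)) atTop (nhds τt)) :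
    xt ∈ projSet (sparseSet n s ∩ boxSet n) (xt - τt • gradient (fObj A y) xt) := by
  have hgrad : Tendsto (fun j => gradient (fObj A y) (x (φ j))) atTop
      (𝓝 (gradient (fObj A y) xt)) :=
    ((contDiff_fObj A y).continuous_gradient.tendsto xt).comp hxconv
  exact mem_projSet_of_tendsto ((isClosed_sparseSet n s).inter (isClosed_boxSet n))
    (hxconv.comp_succ_of_tendsto_norm_sub hdiff hφ.tendsto_atTop)
    (hxconv.sub (hτconv.smul hgrad)) fun j => hupd (φ j)

/-- Theorem 2(ii): every cluster point of the IHT sequence is an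
L-stationary point. -/
theorem cluster_point_is_L_stationary {n m s : ℕ} (hn : 0 < n) (hm : 0 < m) (hs : 0 < s)
    (hsn : s ≤ n) (A : Fin m → Matrix (Fin n) (Fin n) ℝ) (y : Fin m → ℝ)
    {τmin τmax : ℝ} (hτmin : 0 < τmin) (hττ : τmin ≤ τmax)
    (τ : ℕ → ℝ) (hτ : ∀ k, τ k ∈ Set.Icc τmin τmax)
    (x : ℕ → EuclideanSpace ℝ (Fin n)) (hxmem : ∀ k, x k ∈ sparseSet n s ∩ boxSet n)
    (hupd : ∀ k, x (k + 1) ∈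
      projSet (sparseSet n s ∩ boxSet n) (x k - τ k • gradient (fObj A y) (x k)))
    (hdiff : Tendsto (fun k => ‖x (k + 1) - x k‖) atTop (nhds 0))
    {φ : ℕ → ℕ} (hφ : StrictMono φ) {xt : EuclideanSpace ℝ (Fin n)} {τt : ℝ}
    (hxconv : Tendsto (fun j => x (φ j)) atTop (nhds xt))
    (hτconv : Tendsto (fun j => τ (φ j)) atTop (nhds τt)) :
    xt ∈ projSet (sparseSet n s ∩ boxSet n) (xt - τt • gradient (fObj A y) xt) :=
  cluster_point_is_L_stationary_general A y τ x hupd hdiff hφ hxconv hτconv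
end
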